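/- For every set X and all φ, ψ, ρ : X → Σ, one has ρ ≤ (x ↦ φ(x) → ψ(x)) if and only if (x ↦ ρ(x) ∧ φ(x)) ≤ ψ; that is, pointwise implication is a Heyting implication in the preorder (X → Σ, ≤). -/

import Mathlib

open CategoryTheory Encodable Denumerable

namespace Herbrand

/-- Kleene application in Kleene's first pca `K₁`: `e · n`. -/
def kap (e n : ℕ) : Part ℕ := Nat.Partrec.Code.eval (ofNat Nat.Partrec.Code e) n

/-- `kapIn r n S` : `r · n` is defined and its value lies in `S`. -/
def kapIn (r n : ℕ) (S : Set ℕ) : Prop := ∃ v ∈ kap r n, v ∈ S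

/-- The list coded by a natural number (canonical bijection `ℕ ≃ List ℕ`). -/
def toL (n : ℕ) : List ℕ := ofNat (List ℕ) n

/-- The code of a list of natural numbers. -/
def ofL (l : List ℕ) : ℕ := encode l

@[simp] lemma toL_ofL (l : List ℕ) : toL (ofL l) = l := ofNat_encode l

/-- `!A` : the set of codes of lists all of whose entries lie in `A`. -/
def bang (A : Set ℕ) : Set ℕ := {n | ∀ x ∈ toL n, x ∈ A}

/-- `m ⪯ n` : every entry of the list coded by `m` is an entry of the list coded by `n`. -/
def sle (m n : ℕ) : Prop := ∀ x ∈ toL m, x ∈ toL n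

lemma sle_refl (m : ℕ) : sle m m := fun _ hx => hx

lemma sle_trans {m n k : ℕ} (h1 : sle m n) (h2 : sle n k) : sle m k :=
  fun x hx => h2 x (h1 x hx)

/-- `S` is upward closed in `!A`. -/
def UpwardClosedIn (A S : Set ℕ) : Prop :=
  ∀ m ∈ S, ∀ n ∈ bang A, sle m n → n ∈ S

/-- `↑_{!A} S` : the set of `n ∈ !A` with `m ⪯ n` for some `m ∈ S`. -/
def upClo (A S : Set ℕ) : Set ℕ := {n | n ∈ bang A ∧ ∃ m ∈ S, sle m n}

lemma mem_bang_univ (n : ℕ) : n ∈ bang Set.univ := fun x _ => Set.mem_univ x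

/-- From a partial recursive function we get a `K₁`-code for it. -/
theorem exists_kap_eq {f : ℕ →. ℕ} (hf : Nat.Partrec f) : ∃ e, ∀ n, kap e n = f n := by
  obtain ⟨c, hc⟩ := Nat.Partrec.Code.exists_code.mp hf
  exact ⟨encode c, fun n => by simp [kap, hc]⟩


/-- A pair of sets of numbers: candidate Herbrand truth value `(X₀, X₁)`. -/
structure HPair where
  act : Set ℕ
  pot : Set ℕ

/-- `X` is a Herbrand truth value (an element of `Σ`): `X₀ ⊆ !X₁` and
`X₀` is upward closed in `!X₁`. -/
def HPair.IsSigma (X : HPair) : Prop :=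
  X.act ⊆ bang X.pot ∧ UpwardClosedIn X.pot X.act

/-- The preorder on `X → Σ` of the Herbrand tripos. -/
def hle {X : Type} (φ ψ : X → HPair) : Prop :=
  ∃ r : ℕ, ∀ x : X, ∀ n : ℕ,
    (n ∈ bang (φ x).pot → kapIn r n (bang (ψ x).pot)) ∧
    (n ∈ (φ x).act → kapIn r n (ψ x).act)

/-- `A & B = {Nat.pair 0 a : a ∈ A} ∪ {Nat.pair 1 b : b ∈ B}`. -/
def amp (A B : Set ℕ) : Set ℕ :=
  (fun a => Nat.pair 0 a) '' A ∪ (fun b => Nat.pair 1 b) '' B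

/-- `m_A`: the code of the list of all `a` with `Nat.pair 0 a` an entry of the list coded
by `m`. -/
def projL (m : ℕ) : ℕ :=
  ofL ((toL m).filterMap fun p => if p.unpair.1 = 0 then some p.unpair.2 else none)

/-- `m_B`: the code of the list of all `b` with `Nat.pair 1 b` an entry of the list coded
by `m`. -/
def projR (m : ℕ) : ℕ :=
  ofL ((toL m).filterMap fun p => if p.unpair.1 = 1 then some p.unpair.2 else none)

/-- Conjunction of Herbrand truth values. -/
def conj (A B : HPair) : HPair where
  act := {m | m ∈ bang (amp A.pot B.pot) ∧ projL m ∈ A.act ∧ projR m ∈ B.act}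
  pot := amp A.pot B.pot

/-- Disjunction of Herbrand truth values. -/
def disj (A B : HPair) : HPair where
  act := {m | m ∈ bang (amp A.pot B.pot) ∧ (projL m ∈ A.act ∨ projR m ∈ B.act)}
  pot := amp A.pot B.pot

/-- The potential realizers of an implication. -/
def implPot (A B : HPair) : Set ℕ := {c | ∀ m ∈ bang A.pot, kapIn c m (bang B.pot)}

/-- Implication of Herbrand truth values. -/
def impl (A B : HPair) : HPair where
  act := upClo (implPot A B)
    {n | ∃ c, n = ofL [c] ∧ c ∈ implPot A B ∧ ∀ m ∈ A.act, kapIn c m B.act}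
  pot := implPot A B

/-- The bottom Herbrand truth value `(∅, ∅)`. -/
def bot : HPair := ⟨∅, ∅⟩

/-- Negation of Herbrand truth values: `¬A = A → (∅, ∅)`. -/
def neg (A : HPair) : HPair := impl A bot

/-!
Given a realizer `r` of `ρ ≤ (φ → ψ)`, a realizer of `ρ ∧ φ ≤ ψ` sends `m` to the concatenation of
the lists `c · m_φ` for the codes `c` in the list `r · m_ρ`. These computations all halt because
the entries of `r · m_ρ` are potential realizers of `φ → ψ`; when `m` is an actual realizer, one
of these entries is an actual realizer `c`, so `c · m_φ` lies in `ψ₀` and is contained in the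
concatenation, which is then in `ψ₀` by upward closure. Conversely, a realizer `s` of
`ρ ∧ φ ≤ ψ` is curried by the s-m-n theorem: `n ↦ ⟨cₙ⟩` with `cₙ · m = s · (n, m)`, the pair of
list codes `n, m` merged into one list over `ρ₁ & φ₁`.
-/

open Nat.Partrec (Code)

@[simp] lemma ofL_toL (n : ℕ) : ofL (toL n) = n := encode_ofNat n

@[simp] lemma ofL_singleton_mem_bang {c : ℕ} {S : Set ℕ} : ofL [c] ∈ bang S ↔ c ∈ S := by
  simp [bang]

lemma mem_filterMap_unpair {i x : ℕ} {l : List ℕ} :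
    x ∈ l.filterMap (fun p => if p.unpair.1 = i then some p.unpair.2 else none) ↔
      Nat.pair i x ∈ l := by
  simp only [List.mem_filterMap, Option.ite_none_right_eq_some, Option.some.injEq]
  constructor
  · rintro ⟨p, hp, hi, rfl⟩
    rwa [← hi, Nat.pair_unpair]
  · exact fun h => ⟨_, h, by simp⟩

@[simp] lemma mem_toL_projL {x m : ℕ} : x ∈ toL (projL m) ↔ Nat.pair 0 x ∈ toL m := by
  rw [projL, toL_ofL, mem_filterMap_unpair]

@[simp] lemma mem_toL_projR {x m : ℕ} : x ∈ toL (projR m) ↔ Nat.pair 1 x ∈ toL m := by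
  rw [projR, toL_ofL, mem_filterMap_unpair]

@[simp] lemma pair_zero_mem_amp {A B : Set ℕ} {a : ℕ} : Nat.pair 0 a ∈ amp A B ↔ a ∈ A := by
  simp [amp, Nat.pair_eq_pair]

@[simp] lemma pair_one_mem_amp {A B : Set ℕ} {b : ℕ} : Nat.pair 1 b ∈ amp A B ↔ b ∈ B := by
  simp [amp, Nat.pair_eq_pair]

lemma projL_mem_bang {A B : Set ℕ} {m : ℕ} (hm : m ∈ bang (amp A B)) : projL m ∈ bang A :=
  fun _ ha => pair_zero_mem_amp.mp (hm _ (mem_toL_projL.mp ha))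

lemma projR_mem_bang {A B : Set ℕ} {m : ℕ} (hm : m ∈ bang (amp A B)) : projR m ∈ bang B :=
  fun _ hb => pair_one_mem_amp.mp (hm _ (mem_toL_projR.mp hb))

def merge (n m : ℕ) : ℕ :=
  ofL ((toL n).map (Nat.pair 0) ++ (toL m).map (Nat.pair 1))

@[simp] lemma projL_merge (n m : ℕ) : projL (merge n m) = n := by
  simp [projL, merge, List.filterMap_append, List.filterMap_map]

@[simp] lemma projR_merge (n m : ℕ) : projR (merge n m) = m := by
  simp [projR, merge, List.filterMap_append, List.filterMap_map]

lemma merge_mem_bang {A B : Set ℕ} {n m : ℕ} (hn : n ∈ bang A) (hm : m ∈ bang B) :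
    merge n m ∈ bang (amp A B) := by
  intro x hx
  rw [merge, toL_ofL, List.mem_append, List.mem_map, List.mem_map] at hx
  rcases hx with ⟨a, ha, rfl⟩ | ⟨b, hb, rfl⟩
  · exact pair_zero_mem_amp.mpr (hn a ha)
  · exact pair_one_mem_amp.mpr (hm b hb)

lemma primrec_toL : Primrec toL := Primrec.ofNat (List ℕ)

lemma primrec_ofL : Primrec ofL := Primrec.encode

lemma primrec_filterMap_unpair (i : ℕ) : Primrec fun m : ℕ =>
    ofL ((toL m).filterMap fun p => if p.unpair.1 = i then some p.unpair.2 else none) :=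
  primrec_ofL.comp <| Primrec.listFilterMap primrec_toL <| Primrec.to₂ <|
    Primrec.ite (Primrec.eq.comp (Primrec.fst.comp (Primrec.unpair.comp Primrec.snd))
      (Primrec.const i))
      (Primrec.option_some.comp (Primrec.snd.comp (Primrec.unpair.comp Primrec.snd)))
      (Primrec.const none)

lemma primrec_projL : Primrec projL := primrec_filterMap_unpair 0

lemma primrec_projR : Primrec projR := primrec_filterMap_unpair 1

lemma primrec₂_merge : Primrec₂ merge :=
  primrec_ofL.comp <| Primrec.list_append.comp
    (Primrec.list_map (primrec_toL.comp Primrec.fst)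
      (Primrec₂.natPair.comp (Primrec.const 0) Primrec.snd).to₂)
    (Primrec.list_map (primrec_toL.comp Primrec.snd)
      (Primrec₂.natPair.comp (Primrec.const 1) Primrec.snd).to₂)

lemma partrec₂_kap : Partrec₂ kap :=
  Code.eval_part.comp ((Computable.ofNat Code).comp Computable.fst) Computable.snd

theorem exists_computable_kap_eq {f : ℕ → ℕ →. ℕ} (hf : Partrec₂ f) :
    ∃ g : ℕ → ℕ, Computable g ∧ ∀ n m, kap (g n) m = f n m := by
  obtain ⟨c, hc⟩ := Code.exists_code.mp (Partrec₂.unpaired'.mpr hf)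
  refine ⟨fun n => encode (c.curry n), ?_, fun n m => ?_⟩
  · exact (Primrec.encode.comp (Code.primrec₂_curry.comp (Primrec.const c) Primrec.id)).to_comp
  · simp [kap, Code.eval_curry, hc]

def concatEvaln (k q : ℕ) (l : List ℕ) : Option ℕ :=
  if ∀ c ∈ l, (Code.evaln k (ofNat Code c) q).isSome then
    some (ofL (l.flatMap fun c => toL ((Code.evaln k (ofNat Code c) q).getD 0)))
  else none

lemma primrec_concatEvaln :
    Primrec fun p : (ℕ × ℕ) × List ℕ => concatEvaln p.1.1 p.1.2 p.2 := by
  have hevaln : Primrec₂ fun (kq : ℕ × ℕ) (c : ℕ) => Code.evaln kq.1 (ofNat Code c) kq.2 :=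
    Code.primrec_evaln.comp (((Primrec.fst.comp Primrec.fst).pair
      ((Primrec.ofNat Code).comp Primrec.snd)).pair (Primrec.snd.comp Primrec.fst))
  have hhalts : PrimrecRel fun (c : ℕ) (kq : ℕ × ℕ) =>
      (Code.evaln kq.1 (ofNat Code c) kq.2).isSome = true :=
    Primrec.eq.comp (Primrec.option_isSome.comp (hevaln.comp Primrec.snd Primrec.fst))
      (Primrec.const true)
  refine Primrec.ite (hhalts.forall_mem_list.comp Primrec.snd Primrec.fst)
    (Primrec.option_some.comp (primrec_ofL.comp ?_)) (Primrec.const none)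
  exact Primrec.list_flatMap Primrec.snd <| primrec_toL.comp
    (Primrec.option_getD.comp (hevaln.comp (Primrec.fst.comp Primrec.fst) Primrec.snd)
      (Primrec.const 0))

/-- Dovetailing: searches for a step bound within which every code of the list `a` halts on `q`. -/
def concatApply (a q : ℕ) : Part ℕ := Nat.rfindOpt fun k => concatEvaln k q (toL a)

lemma partrec₂_concatApply : Partrec₂ concatApply :=
  Partrec.rfindOpt (f := fun (p : ℕ × ℕ) k => concatEvaln k p.2 (toL p.1)) <| Primrec.to_comp <|
    primrec_concatEvaln.comp ((Primrec.snd.pair (Primrec.snd.comp Primrec.fst)).pair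
      (primrec_toL.comp (Primrec.fst.comp Primrec.fst)))

lemma evaln_isSome_mono {k₁ k₂ q : ℕ} {c : Code} (hk : k₁ ≤ k₂)
    (h : (Code.evaln k₁ c q).isSome) : (Code.evaln k₂ c q).isSome := by
  obtain ⟨u, hu⟩ := Option.isSome_iff_exists.mp h
  exact Option.isSome_iff_exists.mpr ⟨u, Code.evaln_mono hk hu⟩

lemma exists_evaln_isSome_of_dom (q : ℕ) :
    ∀ l : List ℕ, (∀ c ∈ l, (kap c q).Dom) →
      ∃ k, ∀ c ∈ l, (Code.evaln k (ofNat Code c) q).isSome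
  | [], _ => ⟨0, by simp⟩
  | c :: l, h => by
    obtain ⟨k, hk⟩ := exists_evaln_isSome_of_dom q l fun c' hc' => h c' (.tail c hc')
    obtain ⟨k', hk'⟩ := Code.evaln_complete.mp (Part.dom_iff_mem.mp (h c (.head l))).choose_spec
    refine ⟨max k k', List.forall_mem_cons.mpr ⟨?_, fun c' hc' => ?_⟩⟩
    · exact evaln_isSome_mono (le_max_right k k') (Option.isSome_iff_exists.mpr ⟨_, hk'⟩)
    · exact evaln_isSome_mono (le_max_left k k') (hk c' hc')

lemma exists_mem_concatApply {a q : ℕ} (h : ∀ c ∈ toL a, (kap c q).Dom) :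
    ∃ v ∈ concatApply a q, ∀ x, x ∈ toL v ↔ ∃ c ∈ toL a, ∃ u ∈ kap c q, x ∈ toL u := by
  obtain ⟨k, hk⟩ := exists_evaln_isSome_of_dom q (toL a) h
  have hdom : (concatApply a q).Dom := Nat.rfindOpt_dom.mpr ⟨k, _, if_pos hk⟩
  obtain ⟨v, hv⟩ := Part.dom_iff_mem.mp hdom
  obtain ⟨k', hk'⟩ := Nat.rfindOpt_spec hv
  refine ⟨v, hv, fun x => ?_⟩
  unfold concatEvaln at hk'
  split_ifs at hk' with hall
  · have hout : ∀ c ∈ toL a, (Code.evaln k' (ofNat Code c) q).getD 0 ∈ kap c q := fun c hc => by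
      obtain ⟨u, hu⟩ := Option.isSome_iff_exists.mp (hall c hc)
      simpa [hu, kap] using Code.evaln_sound hu
    rw [← Option.mem_some_iff.mp hk', toL_ofL, List.mem_flatMap]
    refine exists_congr fun c => and_congr_right fun hc => ⟨fun hx => ⟨_, hout c hc, hx⟩, ?_⟩
    rintro ⟨u, hu, hx⟩
    rwa [Part.mem_unique (hout c hc) hu]
  · cases hk'

def Tracks (r : ℕ) (A B : HPair) : Prop :=
  ∀ n, (n ∈ bang A.pot → kapIn r n (bang B.pot)) ∧ (n ∈ A.act → kapIn r n B.act)

section Tracks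

variable {A B C : HPair}

lemma exists_mem_concatApply_of_mem_bang_implPot {a q : ℕ} (ha : a ∈ bang (implPot A B))
    (hq : q ∈ bang A.pot) :
    ∃ v ∈ concatApply a q, v ∈ bang B.pot ∧ ∀ c ∈ toL a, ∀ u ∈ kap c q, sle u v := by
  obtain ⟨v, hv, hmem⟩ := exists_mem_concatApply fun c hc =>
    let ⟨_, hu, _⟩ := ha c hc q hq
    Part.dom_iff_mem.mpr ⟨_, hu⟩
  refine ⟨v, hv, fun x hx => ?_, fun c hc u hu x hx => (hmem x).mpr ⟨c, hc, u, hu, hx⟩⟩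
  obtain ⟨c, hc, u, hu, hxu⟩ := (hmem x).mp hx
  obtain ⟨u', hu', hu'B⟩ := ha c hc q hq
  obtain rfl := Part.mem_unique hu' hu
  exact hu'B x hxu

lemma tracks_conj_of_tracks_impl {r s : ℕ}
    (hs : ∀ m, kap s m = (kap r (projL m)).bind fun a => concatApply a (projR m))
    (hB : UpwardClosedIn B.pot B.act) (h : Tracks r C (impl A B)) : Tracks s (conj C A) B := by
  intro m
  constructor
  · intro hm
    obtain ⟨a, ha, haPot⟩ := (h (projL m)).1 (projL_mem_bang hm)
    obtain ⟨v, hv, hvB, -⟩ := exists_mem_concatApply_of_mem_bang_implPot haPot (projR_mem_bang hm)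
    exact ⟨v, hs m ▸ Part.mem_bind_iff.mpr ⟨a, ha, hv⟩, hvB⟩
  · rintro ⟨hm, hmC, hmA⟩
    obtain ⟨a, ha, haPot, _, ⟨c, rfl, -, hcAct⟩, hca⟩ := (h (projL m)).2 hmC
    obtain ⟨v, hv, hvB, hsub⟩ := exists_mem_concatApply_of_mem_bang_implPot haPot (projR_mem_bang hm)
    obtain ⟨u, hu, huB⟩ := hcAct _ hmA
    exact ⟨v, hs m ▸ Part.mem_bind_iff.mpr ⟨a, ha, hv⟩,
      hB u huB v hvB (hsub c (hca c (by simp)) u hu)⟩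

lemma tracks_impl_of_tracks_conj {s r : ℕ} {g : ℕ → ℕ}
    (hg : ∀ n m, kap (g n) m = kap s (merge n m)) (hr : ∀ n, kap r n = Part.some (ofL [g n]))
    (hC : C.act ⊆ bang C.pot) (hA : A.act ⊆ bang A.pot) (h : Tracks s (conj C A) B) :
    Tracks r C (impl A B) := by
  have hgPot : ∀ n ∈ bang C.pot, g n ∈ implPot A B := fun n hn m hm => by
    rw [kapIn, hg]
    exact (h _).1 (merge_mem_bang hn hm)
  intro n
  refine ⟨fun hn => ⟨_, hr n ▸ Part.mem_some _, ofL_singleton_mem_bang.mpr (hgPot n hn)⟩,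
    fun hn => ⟨_, hr n ▸ Part.mem_some _, ofL_singleton_mem_bang.mpr (hgPot n (hC hn)),
      _, ⟨g n, rfl, hgPot n (hC hn), fun m hm => ?_⟩, sle_refl _⟩⟩
  rw [kapIn, hg]
  exact (h _).2 ⟨merge_mem_bang (hC hn) (hA hm), by simpa using hn, by simpa using hm⟩

end Tracks

section Hle

variable {X : Type} {φ ψ ρ : X → HPair}

theorem hle_conj_of_hle_impl (hψ : ∀ x, UpwardClosedIn (ψ x).pot (ψ x).act)
    (h : hle ρ fun x => impl (φ x) (ψ x)) : hle (fun x => conj (ρ x) (φ x)) ψ := by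
  obtain ⟨r, hr⟩ := h
  have hpartrec : Partrec fun m => (kap r (projL m)).bind fun a => concatApply a (projR m) :=
    (partrec₂_kap.comp (Computable.const r) primrec_projL.to_comp).bind
      (partrec₂_concatApply.comp Computable.snd (primrec_projR.to_comp.comp Computable.fst))
  obtain ⟨s, hs⟩ := exists_kap_eq (Partrec.nat_iff.mp hpartrec)
  exact ⟨s, fun x => tracks_conj_of_tracks_impl hs (hψ x) (hr x)⟩

theorem hle_impl_of_hle_conj (hρ : ∀ x, (ρ x).act ⊆ bang (ρ x).pot)
    (hφ : ∀ x, (φ x).act ⊆ bang (φ x).pot) (h : hle (fun x => conj (ρ x) (φ x)) ψ) :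
    hle ρ fun x => impl (φ x) (ψ x) := by
  obtain ⟨s, hs⟩ := h
  obtain ⟨g, hg_computable, hg⟩ := exists_computable_kap_eq (f := fun n m => kap s (merge n m))
    (partrec₂_kap.comp (Computable.const s) primrec₂_merge.to_comp)
  obtain ⟨r, hr⟩ := exists_kap_eq <| Partrec.nat_iff.mp <| Computable.partrec <|
    primrec_ofL.to_comp.comp (Computable.list_cons.comp hg_computable (Computable.const []))
  exact ⟨r, fun x => tracks_impl_of_tracks_conj hg hr (hρ x) (hφ x) (hs x)⟩

end Hle

/-- pointwise implication is a Heyting implication in the preorder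
`(X → Σ, ≤)`. -/
theorem impl_is_heyting {X : Type} (φ ψ ρ : X → HPair)
    (hφ : ∀ x, (φ x).IsSigma) (hψ : ∀ x, (ψ x).IsSigma) (hρ : ∀ x, (ρ x).IsSigma) :
    hle ρ (fun x => impl (φ x) (ψ x)) ↔ hle (fun x => conj (ρ x) (φ x)) ψ :=
  ⟨hle_conj_of_hle_impl fun x => (hψ x).2,
    hle_impl_of_hle_conj (fun x => (hρ x).1) (fun x => (hφ x).1)⟩

end Herbrand
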